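/- arXiv:2506.18782 — 7 statements merged into one kernel-verified Lean document; each statement's English description precedes it below -/
import Mathlib

section
/- Let r be a positive even integer, let p be a prime with p ∤ r, and let m > r be an integer. Set n = m·p. Then there exists a set S of vertices of the n-dimensional hypercube with |S| = 2^(m + p − 1) such that no two distinct elements of S have Hamming distance exactly r (i.e., S is an independent set in the r-distance graph of the hypercube). -/
/-!
Index the `n = m p` coordinates by `Fin m × Fin p` and take the vectors `x (i, j) = b i xor a j`
with `a 0 = false`; there are `2 ^ (m + p - 1)` of them. If `b, b'` differ in `t` places and
`a, a'` in `s` places, the two vectors are at distance `t (p - s) + (m - t) s`. As `a 0 = a' 0`,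
`s < p`: for `s = 0` the distance is a multiple of `p`, hence not `r`, and for `s > 0` every
row contributes, so the distance is at least `m > r`.
-/

open Finset

theorem hammingDist_comp_equiv {α ι β : Type*} [Fintype α] [Fintype ι] [DecidableEq β]
    (e : α ≃ ι) (u v : ι → β) :
    hammingDist (u ∘ e) (v ∘ e) = hammingDist u v :=
  card_equiv e (by simp)

theorem hammingDist_lt_card_of_apply_eq {ι : Type*} [Fintype ι] {β : ι → Type*}
    [∀ i, DecidableEq (β i)] {x y : ∀ i, β i} {i : ι} (h : x i = y i) :
    hammingDist x y < Fintype.card ι :=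
  card_lt_univ_of_notMem (x := i) (by simp [h])

section OuterXor

variable {ι κ : Type*} [Fintype ι] [Fintype κ]

def outerXor (b : ι → Bool) (a : κ → Bool) : ι × κ → Bool := fun z => xor (b z.1) (a z.2)

theorem hammingDist_outerXor (b b' : ι → Bool) (a a' : κ → Bool) :
    hammingDist (outerXor b a) (outerXor b' a') =
      hammingDist b b' * (Fintype.card κ - hammingDist a a') +
        (Fintype.card ι - hammingDist b b') * hammingDist a a' := by
  classical
  set D : Finset ι := {i | b i ≠ b' i}
  set C : Finset κ := {j | a j ≠ a' j}
  have hsplit : univ.filter (fun z => outerXor b a z ≠ outerXor b' a' z) =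
      D ×ˢ Cᶜ ∪ Dᶜ ×ˢ C := by
    ext ⟨i, j⟩
    rw [mem_filter]
    simp only [mem_univ, true_and, mem_union, mem_product, mem_compl, D, C, mem_filter, outerXor]
    cases b i <;> cases b' i <;> cases a j <;> cases a' j <;> simp
  have hdisj : Disjoint (D ×ˢ Cᶜ) (Dᶜ ×ˢ C) :=
    disjoint_product.mpr (Or.inl disjoint_compl_right)
  change #(univ.filter fun z => outerXor b a z ≠ outerXor b' a' z) =
    #D * (Fintype.card κ - #C) + (Fintype.card ι - #D) * #C
  rw [hsplit, card_union_of_disjoint hdisj, card_product, card_product, card_compl, card_compl]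

theorem hammingDist_outerXor_ne {b b' : ι → Bool} {a a' : κ → Bool} {r : ℕ}
    (hκ : ¬ Fintype.card κ ∣ r) (hι : r < Fintype.card ι)
    (ha : hammingDist a a' < Fintype.card κ) :
    hammingDist (outerXor b a) (outerXor b' a') ≠ r := by
  rw [hammingDist_outerXor]
  have hb : hammingDist b b' ≤ Fintype.card ι := hammingDist_le_card_fintype
  rcases Nat.eq_zero_or_pos (hammingDist a a') with hs | hs
  · rintro rfl
    simp [hs] at hκ
  · have : Fintype.card ι ≤ hammingDist b b' * (Fintype.card κ - hammingDist a a') +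
        (Fintype.card ι - hammingDist b b') * hammingDist a a' :=
      calc Fintype.card ι = hammingDist b b' * 1 + (Fintype.card ι - hammingDist b b') * 1 := by
            omega
        _ ≤ _ := by gcongr <;> omega
    omega

theorem exists_finset_prod_fin_hammingDist_ne (ι : Type*) [Fintype ι] (k r : ℕ)
    (hk : ¬ k + 1 ∣ r) (hr : r < Fintype.card ι) :
    ∃ S : Finset (ι × Fin (k + 1) → Bool),
      #S = 2 ^ (Fintype.card ι + k) ∧ ∀ u ∈ S, ∀ v ∈ S, hammingDist u v ≠ r := by
  classical
  let f : (ι → Bool) × (Fin k → Bool) → ι × Fin (k + 1) → Bool :=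
    fun x => outerXor x.1 (Fin.cons false x.2)
  have hf : Function.Injective f := by
    rintro ⟨b, a⟩ ⟨b', a'⟩ h
    obtain ⟨i₀⟩ : Nonempty ι := Fintype.card_pos_iff.mp (by omega)
    have hb : b = b' := funext fun i => by simpa [f, outerXor] using congrFun h (i, 0)
    have ha : a = a' := funext fun j => by
      simpa [f, outerXor, hb] using congrFun h (i₀, j.succ)
    rw [hb, ha]
  refine ⟨univ.map ⟨f, hf⟩, by simp [pow_add], ?_⟩
  simp only [mem_map, mem_univ, true_and, Function.Embedding.coeFn_mk]
  rintro _ ⟨⟨b, a⟩, rfl⟩ _ ⟨⟨b', a'⟩, rfl⟩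
  exact hammingDist_outerXor_ne (by simpa using hk) (by simpa using hr)
    (hammingDist_lt_card_of_apply_eq (i := 0) rfl)

end OuterXor

theorem exists_large_independent_set_in_distance_graph_general
    (r p m n : ℕ) (hp : p.Prime) (hpr : ¬ p ∣ r)
    (hm : r < m) (hn : n = m * p) :
    ∃ S : Finset (Fin n → Bool),
      S.card = 2 ^ (m + p - 1) ∧
      ∀ u ∈ S, ∀ v ∈ S, u ≠ v → hammingDist u v ≠ r := by
  obtain ⟨k, rfl⟩ : ∃ k, p = k + 1 := Nat.exists_eq_succ_of_ne_zero hp.ne_zero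
  obtain ⟨S, hcard, hS⟩ :=
    exists_finset_prod_fin_hammingDist_ne (Fin m) k r hpr (by simpa using hm)
  let e : Fin n ≃ Fin m × Fin (k + 1) := (finCongr hn).trans finProdFinEquiv.symm
  refine ⟨S.map ⟨(· ∘ e), e.surjective.injective_comp_right⟩, by simp [hcard], ?_⟩
  simp only [mem_map, Function.Embedding.coeFn_mk]
  rintro _ ⟨u, hu, rfl⟩ _ ⟨v, hv, rfl⟩ -
  rw [hammingDist_comp_equiv]
  exact hS u hu v hv

/-- For a positive even `r`, a prime `p` not dividing `r`, and `m > r`,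
with `n = m * p`, there is an independent set of size `2^(m+p-1)` in the `r`-distance
graph of the `n`-dimensional hypercube. -/
theorem exists_large_independent_set_in_distance_graph
    (r p m n : ℕ) (hr : 0 < r) (hre : Even r) (hp : p.Prime) (hpr : ¬ p ∣ r)
    (hm : r < m) (hn : n = m * p) :
    ∃ S : Finset (Fin n → Bool),
      S.card = 2 ^ (m + p - 1) ∧
      ∀ u ∈ S, ∀ v ∈ S, u ≠ v → hammingDist u v ≠ r :=
  exists_large_independent_set_in_distance_graph_general r p m n hp hpr hm hn
end

section
/- Let n be a positive integer and let r be a positive even integer with 3r ≤ 2n. Then there exists a triangle-free subset S of the r-distance graph of the n-dimensional hypercube with |S| ≥ (2√2/3) · 2^n / √(C(n,r) · C(r,r/2) · C(n−r,r/2)), where C(a,b) denotes the binomial coefficient. -/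
/-!
Deletion method. Keep each vertex of the cube independently with probability `p`; the expected
number of kept vertices minus the expected number of triangles all of whose vertices are kept is
`2 ^ n * p - T * p ^ 3`, where `T` is the number of triangles, and removing one vertex from each
kept triangle leaves a triangle-free set. An ordered triangle `(u, v, w)` is determined by `u`,
the `r`-set `D(u, v)` of coordinates where `u` and `v` differ, and the two halves
`D(u, w) \ D(u, v)`, `D(u, w) ∩ D(u, v)`, each of size `r / 2` because `|D(v, w)| = r` too.
Hence `6 T ≤ 2 ^ n * c` with `c = C(n, r) C(r, r/2) C(n - r, r/2)`, and `p = √(2 / c)` gives the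
bound.
-/

open Finset

section BernoulliSubset

variable {V : Type*} [Fintype V] [DecidableEq V]

/-- The probability that the random subset of `V` containing each element independently with
probability `p` equals `S`. -/
noncomputable def bernoulliWeight (p : ℝ) (S : Finset V) : ℝ := p ^ #S * (1 - p) ^ #Sᶜ

lemma bernoulliWeight_nonneg {p : ℝ} (hp0 : 0 ≤ p) (hp1 : p ≤ 1) (S : Finset V) :
    0 ≤ bernoulliWeight p S :=
  mul_nonneg (pow_nonneg hp0 _) (pow_nonneg (sub_nonneg.2 hp1) _)

lemma sum_bernoulliWeight_filter_superset (p : ℝ) (t : Finset V) :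
    ∑ S with t ⊆ S, bernoulliWeight p S = p ^ #t := by
  have hcompl : ∀ S : Finset V,
      ∏ a ∈ Sᶜ, (if a ∉ t then 1 - p else 0) = if t ⊆ S then (1 - p) ^ #Sᶜ else 0 := by
    intro S
    have : (∀ a ∈ Sᶜ, a ∉ t) ↔ t ⊆ S := disjoint_left.symm.trans disjoint_compl_left_iff
    simp only [prod_ite_zero, this, prod_const]
  calc ∑ S with t ⊆ S, bernoulliWeight p S
      = ∑ S, (∏ a ∈ S, p) * ∏ a ∈ Sᶜ, (if a ∉ t then 1 - p else 0) := by
        simp only [sum_filter, hcompl, prod_const, bernoulliWeight, mul_ite, mul_zero]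
    _ = ∏ a, (p + if a ∉ t then 1 - p else 0) := (Fintype.prod_add _ _).symm
    _ = ∏ a, (if a ∈ t then p else 1) := by
        refine Fintype.prod_congr _ _ fun a => ?_
        split_ifs <;> ring
    _ = p ^ #t := by simp [prod_ite_mem]

lemma sum_bernoulliWeight (p : ℝ) : ∑ S : Finset V, bernoulliWeight p S = 1 := by
  simpa using sum_bernoulliWeight_filter_superset p (∅ : Finset V)

lemma sum_bernoulliWeight_mul_card_filter_subset (p : ℝ) (F : Finset (Finset V)) :
    ∑ S, bernoulliWeight p S * #{t ∈ F | t ⊆ S} = ∑ t ∈ F, p ^ #t := by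
  simp_rw [card_filter, Nat.cast_sum, mul_sum, Nat.cast_ite, Nat.cast_one, Nat.cast_zero,
    mul_ite, mul_one, mul_zero]
  rw [sum_comm]
  exact sum_congr rfl fun t _ => by rw [← sum_filter, sum_bernoulliWeight_filter_superset]

lemma sum_bernoulliWeight_mul_card (p : ℝ) :
    ∑ S : Finset V, bernoulliWeight p S * #S = Fintype.card V * p := by
  have hcard : ∀ S : Finset V, #{t ∈ univ.map ⟨singleton, singleton_injective⟩ | t ⊆ S} = #S := by
    intro S
    simp [filter_map]
  simpa [hcard, mul_comm] using sum_bernoulliWeight_mul_card_filter_subset p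
    (univ.map ⟨singleton, singleton_injective⟩ : Finset (Finset V))

lemma exists_sum_bernoulliWeight_mul_le {p : ℝ} (hp0 : 0 ≤ p) (hp1 : p ≤ 1)
    (f : Finset V → ℝ) : ∃ S, ∑ S', bernoulliWeight p S' * f S' ≤ f S := by
  obtain ⟨S, -, hS⟩ := exists_max_image univ f univ_nonempty
  refine ⟨S, ?_⟩
  calc ∑ S', bernoulliWeight p S' * f S'
      ≤ ∑ S', bernoulliWeight p S' * f S :=
        sum_le_sum fun S' _ => mul_le_mul_of_nonneg_left (hS S' (mem_univ _))
          (bernoulliWeight_nonneg hp0 hp1 S')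
    _ = f S := by rw [← sum_mul, sum_bernoulliWeight, one_mul]

omit [Fintype V] in
lemma exists_card_le_forall_not_disjoint (F : Finset (Finset V)) (hF : ∀ t ∈ F, t.Nonempty) :
    ∃ B : Finset V, #B ≤ #F ∧ ∀ t ∈ F, ¬Disjoint t B := by
  choose x hx using hF
  refine ⟨F.attach.image fun t => x t.1 t.2, card_image_le.trans_eq card_attach, fun t ht => ?_⟩
  exact not_disjoint_iff.2 ⟨x t ht, hx t ht, mem_image.2 ⟨⟨t, ht⟩, mem_attach _ _, rfl⟩⟩

theorem exists_forall_not_subset_card_ge (F : Finset (Finset V)) (hF : ∀ t ∈ F, t.Nonempty)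
    {p : ℝ} (hp0 : 0 ≤ p) (hp1 : p ≤ 1) :
    ∃ S : Finset V, (∀ t ∈ F, ¬t ⊆ S) ∧ Fintype.card V * p - ∑ t ∈ F, p ^ #t ≤ #S := by
  obtain ⟨S, hS⟩ := exists_sum_bernoulliWeight_mul_le hp0 hp1
    fun S => (#S : ℝ) - #{t ∈ F | t ⊆ S}
  obtain ⟨B, hBcard, hB⟩ := exists_card_le_forall_not_disjoint {t ∈ F | t ⊆ S}
    fun t ht => hF t (mem_filter.1 ht).1
  refine ⟨S \ B, fun t ht htSB => ?_, ?_⟩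
  · obtain ⟨htS, htB⟩ := subset_sdiff.1 htSB
    exact hB t (mem_filter.2 ⟨ht, htS⟩) htB
  · have hexp : ∑ S', bernoulliWeight p S' * ((#S' : ℝ) - #{t ∈ F | t ⊆ S'})
        = Fintype.card V * p - ∑ t ∈ F, p ^ #t := by
      simp only [mul_sub, sum_sub_distrib, sum_bernoulliWeight_mul_card,
        sum_bernoulliWeight_mul_card_filter_subset]
    have hsdiff : (#S : ℝ) ≤ #(S \ B) + #B := by exact_mod_cast card_le_card_sdiff_add_card
    have hB' : (#B : ℝ) ≤ #{t ∈ F | t ⊆ S} := by exact_mod_cast hBcard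
    linarith

end BernoulliSubset

section DistinctTriples

variable {α : Type*} [DecidableEq α]

def distinctTriples (s : Finset α) : Finset (α × α × α) :=
  {x ∈ s ×ˢ s ×ˢ s | x.1 ≠ x.2.1 ∧ x.1 ≠ x.2.2 ∧ x.2.1 ≠ x.2.2}

lemma card_distinctTriples_of_card_eq_three {s : Finset α} (hs : #s = 3) :
    #(distinctTriples s) = 6 := by
  obtain ⟨a, b, c, hab, hac, hbc, rfl⟩ := card_eq_three.1 hs
  have : distinctTriples {a, b, c} =
      {(a, b, c), (a, c, b), (b, a, c), (b, c, a), (c, a, b), (c, b, a)} := by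
    ext ⟨x, y, z⟩
    simp only [distinctTriples, mem_filter, mem_product, mem_insert, mem_singleton, Prod.mk.injEq]
    constructor
    · rintro ⟨⟨hx | hx | hx, hy | hy | hy, hz | hz | hz⟩, h1, h2, h3⟩ <;> subst hx hy hz <;>
        simp_all
    · rintro (h | h | h | h | h | h) <;> obtain ⟨rfl, rfl, rfl⟩ := h <;> simp_all [eq_comm]
  rw [this]
  simp [card_insert_of_notMem, hab, hac, hbc, hab.symm, hac.symm, hbc.symm]

lemma insert_eq_of_mem_distinctTriples {s : Finset α} (hs : #s = 3) {x : α × α × α}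
    (hx : x ∈ distinctTriples s) : {x.1, x.2.1, x.2.2} = s := by
  obtain ⟨hx, h12, h13, h23⟩ := mem_filter.1 hx
  obtain ⟨h1, h2, h3⟩ := by simpa only [mem_product] using hx
  refine eq_of_subset_of_card_le
    (insert_subset h1 (insert_subset h2 (singleton_subset_iff.2 h3))) ?_
  rw [hs, card_eq_three.2 ⟨_, _, _, h12, h13, h23, rfl⟩]

end DistinctTriples

section Hypercube

variable {ι : Type*} [Fintype ι]

def diffSet (u v : ι → Bool) : Finset ι := {i | u i ≠ v i}

lemma hammingDist_eq_card_diffSet (u v : ι → Bool) : hammingDist u v = #(diffSet u v) := rfl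

lemma eq_of_diffSet_eq {u v w : ι → Bool} (h : diffSet u v = diffSet u w) : v = w := by
  funext i
  have hi := congrArg (i ∈ ·) h
  simp only [diffSet, mem_filter, mem_univ, true_and, eq_iff_iff] at hi
  revert hi
  cases u i <;> cases v i <;> cases w i <;> simp

variable [DecidableEq ι]

lemma diffSet_eq_sdiff_union_sdiff (u v w : ι → Bool) :
    diffSet v w = (diffSet u v \ diffSet u w) ∪ (diffSet u w \ diffSet u v) := by
  ext i
  simp only [diffSet, mem_union, mem_sdiff, mem_filter, mem_univ, true_and]
  cases u i <;> cases v i <;> cases w i <;> simp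

lemma card_diffSet_sdiff_eq_and_card_inter_eq {r : ℕ} (hre : Even r) {u v w : ι → Bool}
    (huv : hammingDist u v = r) (huw : hammingDist u w = r) (hvw : hammingDist v w = r) :
    #(diffSet u w \ diffSet u v) = r / 2 ∧ #(diffSet u w ∩ diffSet u v) = r / 2 := by
  rw [hammingDist_eq_card_diffSet] at huv huw hvw
  rw [diffSet_eq_sdiff_union_sdiff u, card_union_of_disjoint disjoint_sdiff_sdiff] at hvw
  have hv := card_sdiff_add_card_inter (diffSet u v) (diffSet u w)
  have hw := card_sdiff_add_card_inter (diffSet u w) (diffSet u v)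
  rw [inter_comm] at hv
  obtain ⟨m, rfl⟩ := hre
  omega

variable (ι) in
def hammingTriples (r : ℕ) : Finset ((ι → Bool) × (ι → Bool) × (ι → Bool)) :=
  {x | hammingDist x.1 x.2.1 = r ∧ hammingDist x.1 x.2.2 = r ∧ hammingDist x.2.1 x.2.2 = r}

theorem card_hammingTriples_le {r : ℕ} (hre : Even r) :
    #(hammingTriples ι r) ≤ 2 ^ Fintype.card ι *
      ((Fintype.card ι).choose r * r.choose (r / 2) * (Fintype.card ι - r).choose (r / 2)) := by
  let codes : Finset ((ι → Bool) × (Σ _ : Finset ι, Finset ι × Finset ι)) :=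
    univ ×ˢ (powersetCard r univ).sigma fun A => powersetCard (r / 2) Aᶜ ×ˢ powersetCard (r / 2) A
  have hcodes : #codes = 2 ^ Fintype.card ι *
      ((Fintype.card ι).choose r * r.choose (r / 2) * (Fintype.card ι - r).choose (r / 2)) := by
    rw [card_product, card_sigma, sum_congr rfl fun A hA => by
      rw [card_product, card_powersetCard, card_powersetCard, card_compl,
        (mem_powersetCard.1 hA).2]]
    simp [mul_assoc, mul_comm]
  rw [← hcodes]
  refine card_le_card_of_injOn (fun x => (x.1, ⟨diffSet x.1 x.2.1,
    (diffSet x.1 x.2.2 \ diffSet x.1 x.2.1, diffSet x.1 x.2.2 ∩ diffSet x.1 x.2.1)⟩)) ?_ ?_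
  · rintro ⟨u, v, w⟩ hx
    obtain ⟨huv, huw, hvw⟩ := (mem_filter.1 hx).2
    obtain ⟨hsdiff, hinter⟩ := card_diffSet_sdiff_eq_and_card_inter_eq hre huv huw hvw
    simp only [codes, mem_coe, mem_product, mem_univ, true_and, mem_sigma, mem_powersetCard]
    exact ⟨⟨subset_univ _, huv⟩, ⟨fun i hi => mem_compl.2 (mem_sdiff.1 hi).2, hsdiff⟩,
      inter_subset_right, hinter⟩
  · rintro ⟨u, v, w⟩ - ⟨u', v', w'⟩ - h
    simp only [Prod.mk.injEq, Sigma.mk.injEq, heq_eq_eq] at h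
    obtain ⟨rfl, hv, hsdiff, hinter⟩ := h
    have hw : diffSet u w = diffSet u w' := by
      rw [← sdiff_union_inter (diffSet u w) (diffSet u v),
        ← sdiff_union_inter (diffSet u w') (diffSet u v'), hsdiff, hinter]
    rw [eq_of_diffSet_eq hv, eq_of_diffSet_eq hw]

variable (ι) in
def hammingTriangles (r : ℕ) : Finset (Finset (ι → Bool)) :=
  {t ∈ powersetCard 3 univ | ∀ x ∈ t, ∀ y ∈ t, x ≠ y → hammingDist x y = r}

lemma card_eq_three_of_mem_hammingTriangles {r : ℕ} {t : Finset (ι → Bool)}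
    (ht : t ∈ hammingTriangles ι r) : #t = 3 :=
  (mem_powersetCard.1 (mem_filter.1 ht).1).2

lemma insert_mem_hammingTriangles {r : ℕ} {u v w : ι → Bool} (huv : u ≠ v) (huw : u ≠ w)
    (hvw : v ≠ w) (duv : hammingDist u v = r) (duw : hammingDist u w = r)
    (dvw : hammingDist v w = r) : {u, v, w} ∈ hammingTriangles ι r := by
  refine mem_filter.2 ⟨mem_powersetCard.2 ⟨subset_univ _, card_eq_three.2
    ⟨u, v, w, huv, huw, hvw, rfl⟩⟩, fun x hx y hy hxy => ?_⟩
  simp only [mem_insert, mem_singleton] at hx hy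
  rcases hx with rfl | rfl | rfl <;> rcases hy with rfl | rfl | rfl <;>
    first
      | exact absurd rfl hxy
      | assumption
      | (rw [hammingDist_comm]; assumption)

lemma six_mul_card_hammingTriangles (r : ℕ) :
    6 * #(hammingTriangles ι r) = #((hammingTriangles ι r).biUnion distinctTriples) := by
  rw [card_biUnion, sum_congr rfl fun t ht => card_distinctTriples_of_card_eq_three
    (card_eq_three_of_mem_hammingTriangles ht), sum_const, smul_eq_mul, mul_comm]
  intro t ht t' ht' hne
  refine disjoint_left.2 fun x hx hx' => hne ?_
  rw [← insert_eq_of_mem_distinctTriples (card_eq_three_of_mem_hammingTriangles ht) hx,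
    insert_eq_of_mem_distinctTriples (card_eq_three_of_mem_hammingTriangles ht') hx']

lemma biUnion_distinctTriples_subset_hammingTriples (r : ℕ) :
    (hammingTriangles ι r).biUnion distinctTriples ⊆ hammingTriples ι r := by
  intro x hx
  obtain ⟨t, ht, hx⟩ := mem_biUnion.1 hx
  have hdist := (mem_filter.1 ht).2
  obtain ⟨hx, h12, h13, h23⟩ := mem_filter.1 hx
  obtain ⟨h1, h2, h3⟩ := by simpa only [mem_product] using hx
  exact mem_filter.2 ⟨mem_univ _, hdist _ h1 _ h2 h12, hdist _ h1 _ h3 h13, hdist _ h2 _ h3 h23⟩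

theorem six_mul_card_hammingTriangles_le {r : ℕ} (hre : Even r) :
    6 * #(hammingTriangles ι r) ≤ 2 ^ Fintype.card ι *
      ((Fintype.card ι).choose r * r.choose (r / 2) * (Fintype.card ι - r).choose (r / 2)) := by
  rw [six_mul_card_hammingTriangles]
  exact (card_le_card (biUnion_distinctTriples_subset_hammingTriples r)).trans
    (card_hammingTriples_le hre)

end Hypercube

lemma two_le_choose_mul_choose_mul_choose {n r : ℕ} (hr : 0 < r) (hre : Even r)
    (hrn : 3 * r ≤ 2 * n) : 2 ≤ n.choose r * r.choose (r / 2) * (n - r).choose (r / 2) := by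
  have h1 : 1 ≤ n.choose r := Nat.choose_pos (by omega)
  have h2 : 2 ≤ r.choose (r / 2) := by
    have := Nat.choose_le_middle 1 r
    rw [Nat.choose_one_right] at this
    obtain ⟨m, rfl⟩ := hre
    omega
  have h3 : 1 ≤ (n - r).choose (r / 2) := Nat.choose_pos (by omega)
  simpa using Nat.mul_le_mul (Nat.mul_le_mul h1 h2) h3

-- `√2 / √c` maximizes `p ↦ N * p - N * c / 6 * p ^ 3`.
lemma div_sqrt_le_mul_sub_mul_pow_three {N T c : ℝ} (hc : 0 < c) (hT : 6 * T ≤ N * c) :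
    2 * √2 / 3 * N / √c ≤ N * (√2 / √c) - T * (√2 / √c) ^ 3 := by
  set p := √2 / √c
  have hp2 : p ^ 2 = 2 / c := by rw [div_pow, Real.sq_sqrt zero_le_two, Real.sq_sqrt hc.le]
  have hp3 : T * p ^ 3 ≤ N * c / 6 * p ^ 3 :=
    mul_le_mul_of_nonneg_right (by linarith) (pow_nonneg (by positivity) 3)
  calc 2 * √2 / 3 * N / √c = N * p - N * c / 6 * p ^ 3 := by
        have hsc : 0 < √c := Real.sqrt_pos.2 hc
        rw [pow_succ, hp2]
        simp only [p]
        field_simp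
        ring
    _ ≤ N * p - T * p ^ 3 := by linarith

theorem exists_triangle_free_subset_lower_bound_general
    (n r : ℕ) (hr : 0 < r) (hre : Even r) (hrn : 3 * r ≤ 2 * n) :
    ∃ S : Finset (Fin n → Bool),
      (∀ u ∈ S, ∀ v ∈ S, ∀ w ∈ S, u ≠ v → u ≠ w → v ≠ w →
        ¬(hammingDist u v = r ∧ hammingDist u w = r ∧ hammingDist v w = r)) ∧
      (S.card : ℝ) ≥ (2 * Real.sqrt 2 / 3) * 2 ^ n /
        Real.sqrt ((n.choose r) * (r.choose (r / 2)) * ((n - r).choose (r / 2))) := by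
  set c : ℝ := (n.choose r) * (r.choose (r / 2)) * ((n - r).choose (r / 2))
  have hc : 2 ≤ c := by
    simp only [c]
    exact_mod_cast two_le_choose_mul_choose_mul_choose hr hre hrn
  have hp0 : 0 ≤ √2 / √c := by positivity
  have hp1 : √2 / √c ≤ 1 := div_le_one_of_le₀ (Real.sqrt_le_sqrt hc) (Real.sqrt_nonneg _)
  obtain ⟨S, hfree, hS⟩ := exists_forall_not_subset_card_ge (hammingTriangles (Fin n) r)
    (fun t ht => card_pos.1 (by rw [card_eq_three_of_mem_hammingTriangles ht]; norm_num)) hp0 hp1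
  refine ⟨S, fun u hu v hv w hw huv huw hvw ⟨duv, duw, dvw⟩ => hfree _
    (insert_mem_hammingTriangles huv huw hvw duv duw dvw) (by simp [insert_subset_iff, *]), ?_⟩
  have hT : 6 * (#(hammingTriangles (Fin n) r) : ℝ) ≤ 2 ^ n * c := by
    simpa [c] using (Nat.cast_le (α := ℝ)).2 (six_mul_card_hammingTriangles_le (ι := Fin n) hre)
  rw [sum_congr rfl fun t ht => by rw [card_eq_three_of_mem_hammingTriangles ht], sum_const,
    nsmul_eq_mul] at hS
  simp only [Fintype.card_fun, Fintype.card_bool, Fintype.card_fin, Nat.cast_pow,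
    Nat.cast_ofNat] at hS
  linarith [div_sqrt_le_mul_sub_mul_pow_three (by linarith : (0 : ℝ) < c) hT]

/-- probabilistic lower bound for triangle-free subsets of the
`r`-distance graph of the hypercube. -/
theorem exists_triangle_free_subset_lower_bound
    (n r : ℕ) (hn : 0 < n) (hr : 0 < r) (hre : Even r) (hrn : 3 * r ≤ 2 * n) :
    ∃ S : Finset (Fin n → Bool),
      (∀ u ∈ S, ∀ v ∈ S, ∀ w ∈ S, u ≠ v → u ≠ w → v ≠ w →
        ¬(hammingDist u v = r ∧ hammingDist u w = r ∧ hammingDist v w = r)) ∧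
      (S.card : ℝ) ≥ (2 * Real.sqrt 2 / 3) * 2 ^ n /
        Real.sqrt ((n.choose r) * (r.choose (r / 2)) * ((n - r).choose (r / 2))) :=
  exists_triangle_free_subset_lower_bound_general n r hr hre hrn
end

section
/- Let r be a positive even integer and n a positive integer. The number of unordered triples {u, v, w} of distinct vertices of the n-dimensional hypercube that are pairwise at Hamming distance exactly r equals (1/6) · 2^n · C(n,r) · C(r,r/2) · C(n−r,r/2), where C(a,b) denotes the binomial coefficient. -/
/-!
Count ordered triangles `(u, v, w)` in the graph joining vertices of `{0,1}ⁿ` at Hamming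
distance `r = 2m`; each triangle is counted six times. There are `2ⁿ` choices for `u` and
`C(n, r)` for `v`. Centring the cube at `u`, the vertices `v` and `w` become subsets `D` and `S`
of the coordinates with `|D| = |S| = r`, and `d(v, w) = |D ∆ S| = 2r - 2|D ∩ S|`; so
`d(v, w) = r` exactly when `S` takes `m` coordinates inside `D` and `m` outside, which leaves
`C(r, m) C(n - r, m)` choices for `w`.
-/

open Finset SimpleGraph

namespace Finset

variable {α : Type*} [DecidableEq α]

lemma card_symmDiff_add_two_mul_card_inter (s t : Finset α) :
    #(symmDiff s t) + 2 * #(s ∩ t) = #s + #t := by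
  rw [symmDiff_def, sup_eq_union, card_union_of_disjoint disjoint_sdiff_sdiff,
    ← card_sdiff_add_card_inter s t, ← card_sdiff_add_card_inter t s, inter_comm t s]
  ring

lemma card_filter_card_inter_card_sdiff [Fintype α] (D : Finset α) (a b : ℕ) :
    #{S : Finset α | #(S ∩ D) = a ∧ #(S \ D) = b} = (#D).choose a * (#Dᶜ).choose b := by
  have hsplit {A B : Finset α} (hA : A ⊆ D) (hB : B ⊆ Dᶜ) :
      (A ∪ B) ∩ D = A ∧ (A ∪ B) \ D = B := by
    grind [mem_compl]
  rw [← card_powersetCard a D, ← card_powersetCard b Dᶜ, ← card_product]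
  refine card_nbij' (fun S => (S ∩ D, S \ D)) (fun p => p.1 ∪ p.2) ?_ ?_ ?_ ?_
  · intro S
    simp +contextual [subset_iff]
  · rintro ⟨A, B⟩ hAB
    simp only [coe_product, mem_coe, Set.mem_prod, mem_powersetCard] at hAB
    obtain ⟨⟨hA, rfl⟩, hB, rfl⟩ := hAB
    simp [hsplit hA hB]
  · intro S _
    grind
  · rintro ⟨A, B⟩ hAB
    simp only [coe_product, mem_coe, Set.mem_prod, mem_powersetCard] at hAB
    simp [hsplit hAB.1.1 hAB.2.1]

lemma card_orderings_of_three {a b c : α}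
    (hab : a ≠ b) (hac : a ≠ c) (hbc : b ≠ c) :
    #({(a, b, c), (a, c, b), (b, a, c), (b, c, a), (c, a, b), (c, b, a)} :
      Finset (α × α × α)) = 6 := by
  simp [card_insert_of_notMem, hab, hac, hbc, hab.symm, hac.symm, hbc.symm]

end Finset

namespace SimpleGraph

variable {V : Type*} [Fintype V] (G : SimpleGraph V) [DecidableRel G.Adj]

def orderedTriangles : Finset (V × V × V) :=
  {p | G.Adj p.1 p.2.1 ∧ G.Adj p.1 p.2.2 ∧ G.Adj p.2.1 p.2.2}

lemma card_orderedTriangles_of_regular {k ℓ : ℕ} (hk : G.IsRegularOfDegree k)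
    (hℓ : ∀ v w, G.Adj v w → Fintype.card (G.commonNeighbors v w) = ℓ) :
    #G.orderedTriangles = Fintype.card V * k * ℓ := by
  have hfiber (u v : V) :
      #{w | G.Adj u v ∧ G.Adj u w ∧ G.Adj v w} = if G.Adj u v then ℓ else 0 := by
    split_ifs with huv
    · rw [← hℓ u v huv, Fintype.card_subtype]
      simp [mem_commonNeighbors, huv]
    · simp [huv]
  calc #G.orderedTriangles
      = ∑ u, ∑ v, #{w | G.Adj u v ∧ G.Adj u w ∧ G.Adj v w} := by
        simp only [orderedTriangles, card_filter, Fintype.sum_prod_type]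
    _ = ∑ u : V, k * ℓ := by
        refine sum_congr rfl fun u _ => ?_
        rw [← hk u, ← card_neighborFinset_eq_degree, neighborFinset_eq_filter]
        simp only [hfiber, ← sum_filter, sum_const, smul_eq_mul]
    _ = Fintype.card V * k * ℓ := by simp [mul_assoc]

lemma card_orderedTriangles_eq_six_mul [DecidableEq V] :
    #G.orderedTriangles = 6 * #(G.cliqueFinset 3) := by
  have hmaps : ∀ p ∈ G.orderedTriangles, {p.1, p.2.1, p.2.2} ∈ G.cliqueFinset 3 := by
    rintro ⟨x, y, z⟩ h
    simpa [orderedTriangles, is3Clique_triple_iff] using h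
  rw [card_eq_sum_card_fiberwise hmaps, mul_comm, ← smul_eq_mul, ← sum_const]
  refine sum_congr rfl fun T hT => ?_
  obtain ⟨a, b, c, hab, hac, hbc, rfl⟩ := is3Clique_iff.1 (mem_cliqueFinset_iff.1 hT)
  rw [← card_orderings_of_three hab.ne hac.ne hbc.ne]
  congr 1
  ext ⟨x, y, z⟩
  simp only [orderedTriangles, mem_filter, mem_univ, true_and, mem_insert, mem_singleton,
    Prod.mk.injEq]
  constructor
  · rintro ⟨⟨hxy, hxz, hyz⟩, hxyz⟩
    have hx : x ∈ ({a, b, c} : Finset V) := hxyz ▸ by simp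
    have hy : y ∈ ({a, b, c} : Finset V) := hxyz ▸ by simp
    have hz : z ∈ ({a, b, c} : Finset V) := hxyz ▸ by simp
    simp only [mem_insert, mem_singleton] at hx hy hz
    rcases hx with rfl | rfl | rfl <;> rcases hy with rfl | rfl | rfl <;>
      rcases hz with rfl | rfl | rfl <;> simp_all
  · rintro (⟨rfl, rfl, rfl⟩ | ⟨rfl, rfl, rfl⟩ | ⟨rfl, rfl, rfl⟩ | ⟨rfl, rfl, rfl⟩ |
      ⟨rfl, rfl, rfl⟩ | ⟨rfl, rfl, rfl⟩) <;>
      exact ⟨by simp_all [adj_comm], by ext; simp only [mem_insert, mem_singleton] <;> tauto⟩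

end SimpleGraph

section Hypercube

variable {ι : Type*} [Fintype ι]

/-- The conjunct `u ≠ v` keeps the graph loopless when `r = 0`. -/
def hammingDistGraph (ι : Type*) [Fintype ι] (r : ℕ) : SimpleGraph (ι → Bool) where
  Adj u v := u ≠ v ∧ hammingDist u v = r
  symm := ⟨fun u v h => ⟨h.1.symm, hammingDist_comm u v ▸ h.2⟩⟩
  loopless := ⟨fun _ h => h.1 rfl⟩

instance (r : ℕ) : DecidableRel (hammingDistGraph ι r).Adj :=
  fun u v => inferInstanceAs (Decidable (u ≠ v ∧ hammingDist u v = r))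

lemma hammingDistGraph_adj {r : ℕ} (hr : r ≠ 0) {u v : ι → Bool} :
    (hammingDistGraph ι r).Adj u v ↔ hammingDist u v = r := by
  refine ⟨And.right, fun h => ⟨?_, h⟩⟩
  rw [← hammingDist_ne_zero, h]
  exact hr

variable [DecidableEq ι]

def diffSetEquiv (u : ι → Bool) : (ι → Bool) ≃ Finset ι where
  toFun v := {i | u i ≠ v i}
  invFun S i := if i ∈ S then !u i else u i
  left_inv v := by
    funext i
    cases hu : u i <;> cases hv : v i <;> simp [hu, hv]
  right_inv S := by
    ext i
    by_cases h : i ∈ S <;> simp [h]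

lemma card_diffSetEquiv (u v : ι → Bool) : #(diffSetEquiv u v) = hammingDist u v := rfl

lemma symmDiff_diffSetEquiv (u v w : ι → Bool) :
    symmDiff (diffSetEquiv u v) (diffSetEquiv u w) = diffSetEquiv v w := by
  ext i
  simp only [diffSetEquiv, Equiv.coe_fn_mk, mem_symmDiff, mem_filter, mem_univ, true_and]
  cases u i <;> cases v i <;> cases w i <;> simp

lemma card_filter_hammingDist_eq (u : ι → Bool) (r : ℕ) :
    #{v | hammingDist u v = r} = (Fintype.card ι).choose r := by
  rw [← card_univ, ← card_powersetCard]
  exact card_equiv (diffSetEquiv u) fun v => by simp [card_diffSetEquiv]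

lemma card_filter_hammingDist_eq_and_eq {u v : ι → Bool} {m : ℕ}
    (huv : hammingDist u v = 2 * m) :
    #{w | hammingDist u w = 2 * m ∧ hammingDist v w = 2 * m}
      = (2 * m).choose m * (Fintype.card ι - 2 * m).choose m := by
  have hD : #(diffSetEquiv u v) = 2 * m := huv
  calc _ = #{S : Finset ι | #(S ∩ diffSetEquiv u v) = m ∧ #(S \ diffSetEquiv u v) = m} :=
        card_equiv (diffSetEquiv u) fun w => ?_
    _ = _ := by rw [card_filter_card_inter_card_sdiff, card_compl, hD]
  have hsymm := card_symmDiff_add_two_mul_card_inter (diffSetEquiv u v) (diffSetEquiv u w)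
  have hsplit := card_inter_add_card_sdiff (diffSetEquiv u w) (diffSetEquiv u v)
  rw [symmDiff_diffSetEquiv, card_diffSetEquiv v w, card_diffSetEquiv u w, hD,
    inter_comm] at hsymm
  rw [card_diffSetEquiv u w] at hsplit
  simp only [mem_filter, mem_univ, true_and]
  omega

lemma isRegularOfDegree_hammingDistGraph {r : ℕ} (hr : r ≠ 0) :
    (hammingDistGraph ι r).IsRegularOfDegree ((Fintype.card ι).choose r) := fun u => by
  rw [← card_neighborFinset_eq_degree, neighborFinset_eq_filter,
    ← card_filter_hammingDist_eq u r]
  simp only [hammingDistGraph_adj hr]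

lemma card_commonNeighbors_hammingDistGraph {m : ℕ} (hm : m ≠ 0) {u v : ι → Bool}
    (huv : (hammingDistGraph ι (2 * m)).Adj u v) :
    Fintype.card ((hammingDistGraph ι (2 * m)).commonNeighbors u v)
      = (2 * m).choose m * (Fintype.card ι - 2 * m).choose m := by
  have h2m : 2 * m ≠ 0 := by omega
  rw [← card_filter_hammingDist_eq_and_eq ((hammingDistGraph_adj h2m).1 huv),
    Fintype.card_subtype]
  simp only [mem_commonNeighbors, hammingDistGraph_adj h2m]

lemma coe_cliqueFinset_three_hammingDistGraph (r : ℕ) :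
    ((hammingDistGraph ι r).cliqueFinset 3 : Set (Finset (ι → Bool)))
      = {T | T.card = 3 ∧ ∀ u ∈ T, ∀ v ∈ T, u ≠ v → hammingDist u v = r} := by
  ext T
  simp +contextual [isNClique_iff, and_comm, IsClique, Set.Pairwise, hammingDistGraph]

end Hypercube

theorem card_triangles_distance_graph_general (n r : ℕ) (hr : 0 < r) (hre : Even r) :
    (({T : Finset (Fin n → Bool) | T.card = 3 ∧
        ∀ u ∈ T, ∀ v ∈ T, u ≠ v → hammingDist u v = r} : Set (Finset (Fin n → Bool))).ncard : ℝ)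
      = (1 / 6) * 2 ^ n * (n.choose r) * (r.choose (r / 2)) * ((n - r).choose (r / 2)) := by
  obtain ⟨m, rfl⟩ : ∃ m, r = 2 * m := hre.exists_two_nsmul _
  have hm : m ≠ 0 := by omega
  have hsix : 6 * #((hammingDistGraph (Fin n) (2 * m)).cliqueFinset 3)
      = 2 ^ n * n.choose (2 * m) * ((2 * m).choose m * (n - 2 * m).choose m) := by
    rw [← card_orderedTriangles_eq_six_mul,
      card_orderedTriangles_of_regular _ (isRegularOfDegree_hammingDistGraph (by omega))
        fun _ _ => card_commonNeighbors_hammingDistGraph hm]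
    simp
  rw [← coe_cliqueFinset_three_hammingDistGraph, Set.ncard_coe_finset,
    Nat.mul_div_cancel_left m two_pos]
  have hsix_real : (6 : ℝ) * #((hammingDistGraph (Fin n) (2 * m)).cliqueFinset 3)
      = 2 ^ n * n.choose (2 * m) * ((2 * m).choose m * (n - 2 * m).choose m) := by
    exact_mod_cast hsix
  linear_combination hsix_real / 6

/-- the number of triangles in the `r`-distance graph of the
`n`-dimensional hypercube is `(1/6) · 2^n · C(n,r) · C(r,r/2) · C(n-r,r/2)`. -/
theorem card_triangles_distance_graph (n r : ℕ) (hn : 0 < n) (hr : 0 < r) (hre : Even r) :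
    (({T : Finset (Fin n → Bool) | T.card = 3 ∧
        ∀ u ∈ T, ∀ v ∈ T, u ≠ v → hammingDist u v = r} : Set (Finset (Fin n → Bool))).ncard : ℝ)
      = (1 / 6) * 2 ^ n * (n.choose r) * (r.choose (r / 2)) * ((n - r).choose (r / 2)) :=
  card_triangles_distance_graph_general n r hr hre
end

section
/- Let n ≥ 1. Any triangle-free subset S of the 2-distance graph of the n-dimensional hypercube satisfies |S| ≤ 4 · 2^n / n. -/
/-!
Write `x^i` for the vertex obtained from `x` by flipping coordinate `i`. For `i ≠ j` the vertices
`x^i` and `x^j` are at distance two, so for every vertex `x` at most two of its neighbours `x^i` lie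
in a triangle-free `S`. Double counting the pairs `(x, i)` with `x^i ∈ S`, of which there are exactly
`n · |S|` because flipping `i` is an involution, gives `n · |S| ≤ 2 · 2^n`.
-/

open Finset

variable {ι : Type*} [DecidableEq ι]

def flipAt (x : ι → Bool) (i : ι) : ι → Bool :=
  Function.update x i (!x i)

theorem flipAt_flipAt (x : ι → Bool) (i : ι) : flipAt (flipAt x i) i = x := by
  simp [flipAt]

theorem hammingDist_flipAt_flipAt [Fintype ι] (x : ι → Bool) {i j : ι} (hij : i ≠ j) :
    hammingDist (flipAt x i) (flipAt x j) = 2 := by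
  have hsupport : ({k | flipAt x i k ≠ flipAt x j k} : Finset ι) = {i, j} := by
    ext k
    simp only [mem_filter, mem_univ, true_and, mem_insert, mem_singleton]
    by_cases hki : k = i
    · subst hki; simp [flipAt, hij]
    · by_cases hkj : k = j
      · subst hkj; simp [flipAt, hki]
      · simp [flipAt, hki, hkj]
  rw [hammingDist, hsupport, card_pair hij]

def TwoDistanceTriangleFree [Fintype ι] (S : Finset (ι → Bool)) : Prop :=
  ∀ u ∈ S, ∀ v ∈ S, ∀ w ∈ S, u ≠ v → u ≠ w → v ≠ w →
    ¬(hammingDist u v = 2 ∧ hammingDist u w = 2 ∧ hammingDist v w = 2)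

theorem TwoDistanceTriangleFree.card_flipAt_mem_le_two [Fintype ι] {S : Finset (ι → Bool)}
    (hS : TwoDistanceTriangleFree S) (x : ι → Bool) : #{i | flipAt x i ∈ S} ≤ 2 := by
  by_contra! h
  obtain ⟨i, hi, j, hj, k, hk, hij, hik, hjk⟩ := two_lt_card.mp h
  simp only [mem_filter, mem_univ, true_and] at hi hj hk
  have hdist {a b : ι} (hab : a ≠ b) := hammingDist_flipAt_flipAt x hab
  have hne {a b : ι} (hab : a ≠ b) : flipAt x a ≠ flipAt x b := by
    rw [← hammingDist_ne_zero, hdist hab]; decide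
  exact hS _ hi _ hj _ hk (hne hij) (hne hik) (hne hjk) ⟨hdist hij, hdist hik, hdist hjk⟩

theorem card_filter_flipAt_mem [Fintype ι] (S : Finset (ι → Bool)) (i : ι) :
    #{x | flipAt x i ∈ S} = #S :=
  card_nbij' (flipAt · i) (flipAt · i) (by simp [Set.MapsTo]) (by simp [Set.MapsTo, flipAt_flipAt])
    (fun x _ => flipAt_flipAt x i) (fun x _ => flipAt_flipAt x i)

theorem TwoDistanceTriangleFree.card_mul_card_le [Fintype ι] {S : Finset (ι → Bool)}
    (hS : TwoDistanceTriangleFree S) : Fintype.card ι * #S ≤ 2 * 2 ^ Fintype.card ι :=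
  calc Fintype.card ι * #S = ∑ i : ι, #{x | flipAt x i ∈ S} := by
        simp [card_filter_flipAt_mem]
    _ = ∑ x : ι → Bool, #{i | flipAt x i ∈ S} := by
        simp only [card_filter]; exact sum_comm
    _ ≤ ∑ _x : ι → Bool, 2 := sum_le_sum fun x _ => hS.card_flipAt_mem_le_two x
    _ = 2 * 2 ^ Fintype.card ι := by simp [mul_comm]

/-- any triangle-free subset of the `2`-distance graph of the
`n`-dimensional hypercube (`n ≥ 1`) has at most `4 · 2^n / n` vertices. -/
theorem triangle_free_two_distance_upper_bound
    (n : ℕ) (hn : 1 ≤ n) (S : Finset (Fin n → Bool))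
    (htf : ∀ u ∈ S, ∀ v ∈ S, ∀ w ∈ S, u ≠ v → u ≠ w → v ≠ w →
      ¬(hammingDist u v = 2 ∧ hammingDist u w = 2 ∧ hammingDist v w = 2)) :
    (S.card : ℝ) ≤ 4 * 2 ^ n / n := by
  have hcount : (n : ℝ) * S.card ≤ 2 * 2 ^ n := by
    exact_mod_cast Fintype.card_fin n ▸ TwoDistanceTriangleFree.card_mul_card_le htf
  rw [le_div_iff₀ (by exact_mod_cast hn)]
  nlinarith [pow_pos (two_pos : (0 : ℝ) < 2) n]
end

section
/- Let r be a positive even integer with 2r ≤ n, let k be an integer with r/2 < k ≤ n/2, and let S be a triangle-free subset of the r-distance graph of the n-dimensional hypercube. Let S_k denote the number of elements of S with exactly k coordinates equal to 1. Then C(k, r/2) · S_k ≤ 2 · C(n, k − r/2) · C(n − k + r/2 − 1, r/2 − 1), where C(a,b) denotes the binomial coefficient. -/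
/-!
Put `s = r / 2`. For a `(k - s)`-set `T`, the points of `S` on level `k` whose support contains
`T` are determined by their remaining `s`-subsets of `Tᶜ`, and two such points are at distance
`r` when these `s`-subsets are disjoint. So triangle-freeness leaves no three pairwise disjoint
members in this family. Katona's circle method bounds such a family by
`2 · C(n - k + s - 1, s - 1)`: on a cycle of length `m ≥ 3s`, a set of arcs of length `s`
without three pairwise disjoint ones has at most `2s` members, and averaging over all cyclic
orders of `Tᶜ` gives the bound. Double counting the pairs `(T, v)` with `T ⊆ supp v` finishes.
-/

open Finset Fintype
open scoped symmDiff

/-- The clockwise distance from `x` to `y` on the cycle `ℤ/M`, for `x, y < M`. -/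
def cycleDist (M x y : ℕ) : ℕ := if x ≤ y then y - x else y + M - x

/-- The arcs `[x, x + s)` and `[y, y + s)` of the cycle `ℤ/M` are disjoint. -/
def Separated (M s x y : ℕ) : Prop := s ≤ cycleDist M x y ∧ s ≤ cycleDist M y x

def SeparatedTripleFree (M s : ℕ) (P : Finset ℕ) : Prop :=
  ∀ x ∈ P, ∀ y ∈ P, ∀ z ∈ P, ¬(Separated M s x y ∧ Separated M s x z ∧ Separated M s y z)

lemma separated_of_mod_eq {s x y : ℕ} (hx : x < 3 * s) (hy : y < 3 * s) (hxy : x ≠ y)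
    (hmod : x % s = y % s) : Separated (3 * s) s x y := by
  have hx' := Nat.div_add_mod x s
  have hy' := Nat.div_add_mod y s
  have hqx : x / s < 3 := Nat.div_lt_of_lt_mul (by linarith)
  have hqy : y / s < 3 := Nat.div_lt_of_lt_mul (by linarith)
  unfold Separated cycleDist
  interval_cases x / s <;> interval_cases y / s <;> split_ifs <;> omega

/-- The residue classes modulo `s` are the pairwise separated triples `{t, t + s, t + 2s}`. -/
lemma card_le_of_separatedTripleFree_three_mul {s : ℕ} (hs : 1 ≤ s) {P : Finset ℕ}
    (hP : ∀ p ∈ P, p < 3 * s) (htf : SeparatedTripleFree (3 * s) s P) : #P ≤ 2 * s := by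
  calc #P ≤ 2 * #(range s) :=
        card_le_mul_card_image_of_maps_to (f := (· % s))
          (fun x _ ↦ mem_range.2 (Nat.mod_lt _ hs)) 2 ?_
    _ = 2 * s := by rw [card_range]
  intro t _
  by_contra! h
  obtain ⟨x, hx, y, hy, z, hz, hxy, hxz, hyz⟩ := two_lt_card.1 h
  simp only [mem_filter] at hx hy hz
  exact htf x hx.1 y hy.1 z hz.1
    ⟨separated_of_mod_eq (hP x hx.1) (hP y hy.1) hxy (hx.2.trans hy.2.symm),
     separated_of_mod_eq (hP x hx.1) (hP z hz.1) hxz (hx.2.trans hz.2.symm),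
     separated_of_mod_eq (hP y hy.1) (hP z hz.1) hyz (hy.2.trans hz.2.symm)⟩

/-- Renumbering of the points of the cycle `ℤ/(M + 1)` once the point `q` is deleted. -/
def deletePoint (q x : ℕ) : ℕ := if x < q then x else x - 1

lemma Separated.of_deletePoint {M s q x y : ℕ} (hx : x < M + 1) (hy : y < M + 1)
    (h : Separated M s (deletePoint q x) (deletePoint q y)) :
    Separated (M + 1) s x y := by
  unfold Separated cycleDist deletePoint at *
  split_ifs at * <;> omega

lemma card_le_of_separatedTripleFree {s M : ℕ} (hs : 1 ≤ s) (hM : 3 * s ≤ M) {P : Finset ℕ}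
    (hP : ∀ p ∈ P, p < M) (htf : SeparatedTripleFree M s P) : #P ≤ 2 * s := by
  induction M, hM using Nat.le_induction generalizing P with
  | base => exact card_le_of_separatedTripleFree_three_mul hs hP htf
  | succ M hM ih =>
    -- Either `P` is the whole cycle, or deleting a point outside `P` shortens the cycle
    -- without creating separated pairs.
    by_cases hfull : ∀ q < M + 1, q ∈ P
    · exfalso
      refine htf 0 (hfull 0 (by omega)) s (hfull s (by omega)) (2 * s) (hfull _ (by omega)) ?_
      unfold Separated cycleDist
      split_ifs <;> omega
    push Not at hfull
    obtain ⟨q, hqM, hqP⟩ := hfull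
    have hne : ∀ x ∈ P, x ≠ q := fun x hx hxq ↦ hqP (hxq ▸ hx)
    rw [← card_image_of_injOn (f := deletePoint q) fun x hx y hy h ↦ by
      have := hne x hx; have := hne y hy; unfold deletePoint at h; split_ifs at h <;> omega]
    refine ih (fun p hp ↦ ?_) ?_
    · obtain ⟨x, hx, rfl⟩ := mem_image.1 hp
      have := hP x hx
      unfold deletePoint; split_ifs <;> omega
    · simp only [SeparatedTripleFree, mem_image, forall_exists_index, and_imp]
      rintro _ x hx rfl _ y hy rfl _ z hz rfl ⟨hxy, hxz, hyz⟩
      exact htf x hx y hy z hz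
        ⟨hxy.of_deletePoint (hP x hx) (hP y hy),
         hxz.of_deletePoint (hP x hx) (hP z hz),
         hyz.of_deletePoint (hP y hy) (hP z hz)⟩

lemma cycleDist_zero_left (M y : ℕ) : cycleDist M 0 y = y := by simp [cycleDist]

lemma Fin.val_sub_eq_cycleDist {m : ℕ} [NeZero m] (x i : Fin m) :
    ((x - i : Fin m) : ℕ) = cycleDist m i x := by
  unfold cycleDist
  split_ifs with h
  · exact Fin.coe_sub_iff_le.2 h
  · rw [Fin.coe_sub_iff_lt.2 (not_le.1 h)]
    omega

section Katona

variable {α : Type*} [Fintype α]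

/-- The preimage under `f` of the arc `{i, i + 1, …, i + s - 1}` of `ℤ/(card α)`. -/
def Numbering.arc (f : Numbering α) (s : ℕ) (i : Fin (card α)) : Finset α :=
  {a | cycleDist (card α) i (f a) < s}

lemma Numbering.disjoint_arc_of_separated (f : Numbering α) {s : ℕ} {i j : Fin (card α)}
    (h : Separated (card α) s i j) : Disjoint (f.arc s i) (f.arc s j) := by
  refine disjoint_left.2 fun a hai haj ↦ ?_
  simp only [Numbering.arc, mem_filter, mem_univ, true_and] at hai haj
  have := (f a).isLt; have := i.isLt; have := j.isLt
  unfold Separated cycleDist at *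
  split_ifs at * <;> omega

lemma Numbering.card_filter_arc_mem_le [DecidableEq α] (f : Numbering α) {s : ℕ} (hs : 1 ≤ s)
    (hα : 3 * s ≤ card α) {F : Finset (Finset α)}
    (hF : ∀ A ∈ F, ∀ B ∈ F, ∀ C ∈ F, ¬(Disjoint A B ∧ Disjoint A C ∧ Disjoint B C)) :
    #{i | f.arc s i ∈ F} ≤ 2 * s := by
  rw [← card_map Fin.valEmbedding]
  refine card_le_of_separatedTripleFree hs hα (fun p hp ↦ ?_) ?_
  · obtain ⟨i, -, rfl⟩ := mem_map.1 hp
    exact i.isLt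
  · simp only [SeparatedTripleFree, mem_map, mem_filter, mem_univ, true_and,
      Fin.valEmbedding_apply, forall_exists_index, and_imp]
    rintro _ i hi rfl _ j hj rfl _ l hl rfl ⟨hij, hil, hjl⟩
    exact hF _ hi _ hj _ hl ⟨f.disjoint_arc_of_separated hij,
      f.disjoint_arc_of_separated hil, f.disjoint_arc_of_separated hjl⟩

lemma Numbering.arc_trans_subRight [NeZero (card α)] (f : Numbering α) (s : ℕ)
    (i : Fin (card α)) : Numbering.arc (f.trans (Equiv.subRight i)) s 0 = f.arc s i := by
  ext a
  simp only [Numbering.arc, mem_filter, mem_univ, true_and, Equiv.trans_apply,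
    Equiv.subRight_apply, Fin.val_zero, cycleDist_zero_left, Fin.val_sub_eq_cycleDist]

lemma Numbering.isPrefix_iff_arc_zero [NeZero (card α)] {f : Numbering α} {A : Finset α} :
    f.IsPrefix A ↔ f.arc #A 0 = A := by
  simp [Numbering.IsPrefix, Numbering.arc, cycleDist, Finset.ext_iff, iff_comm]

lemma Numbering.card_filter_arc_mem [DecidableEq α] [NeZero (card α)] {s : ℕ}
    {F : Finset (Finset α)} (hF : (F : Set (Finset α)).Sized s) (i : Fin (card α)) :
    #{f : Numbering α | f.arc s i ∈ F} = #F * (s.factorial * (card α - s).factorial) := by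
  have hrot : #{f : Numbering α | f.arc s i ∈ F} = #{f : Numbering α | f.arc s 0 ∈ F} :=
    card_equiv (Equiv.equivCongr (.refl α) (Equiv.subRight i)) fun f ↦ by
      simp [Equiv.equivCongr_refl_left, Numbering.arc_trans_subRight]
  rw [hrot, card_eq_sum_card_fiberwise (s := {g : Numbering α | g.arc s 0 ∈ F}) (t := F)
      fun g hg ↦ by simpa using hg,
    ← smul_eq_mul, ← sum_const]
  refine sum_congr rfl fun A hA ↦ ?_
  rw [← hF hA, ← Numbering.card_prefixed A]
  congr 1
  ext f
  simp only [mem_filter, mem_univ, true_and, Numbering.mem_prefixed,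
    Numbering.isPrefix_iff_arc_zero, hF hA]
  exact ⟨And.right, fun h ↦ ⟨h ▸ hA, h⟩⟩

lemma factorial_mul_two_mul_eq_choose_mul {m s : ℕ} (hs : 1 ≤ s) (hsm : s ≤ m) :
    m.factorial * (2 * s) =
      2 * (m - 1).choose (s - 1) * (m * (s.factorial * (m - s).factorial)) := by
  obtain ⟨m, rfl⟩ : ∃ m', m = m' + 1 := ⟨m - 1, by omega⟩
  obtain ⟨s, rfl⟩ : ∃ s', s = s' + 1 := ⟨s - 1, by omega⟩
  rw [Nat.add_sub_cancel, Nat.add_sub_cancel, Nat.add_sub_add_right, Nat.factorial_succ,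
    Nat.factorial_succ, ← Nat.choose_mul_factorial_mul_factorial (by omega : s ≤ m)]
  ring

theorem card_le_of_no_three_pairwise_disjoint [DecidableEq α] {s : ℕ} (hs : 1 ≤ s)
    (hα : 3 * s ≤ card α) {F : Finset (Finset α)} (hFs : (F : Set (Finset α)).Sized s)
    (hF : ∀ A ∈ F, ∀ B ∈ F, ∀ C ∈ F, ¬(Disjoint A B ∧ Disjoint A C ∧ Disjoint B C)) :
    #F ≤ 2 * (card α - 1).choose (s - 1) := by
  have : NeZero (card α) := ⟨by omega⟩
  have hcount := card_mul_le_card_mul (fun (i : Fin (card α)) (f : Numbering α) ↦ f.arc s i ∈ F)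
    (s := univ) (t := univ) (m := #F * (s.factorial * (card α - s).factorial)) (n := 2 * s)
    (fun i _ ↦ (Numbering.card_filter_arc_mem hFs i).ge)
    (fun f _ ↦ f.card_filter_arc_mem_le hs hα hF)
  rw [card_univ, card_univ, Fintype.card_fin, Fintype.card_numbering,
    factorial_mul_two_mul_eq_choose_mul hs (by omega)] at hcount
  refine Nat.le_of_mul_le_mul_right (c := card α * (s.factorial * (card α - s).factorial)) ?_
    (Nat.mul_pos (by omega) (by positivity))
  calc #F * (card α * (s.factorial * (card α - s).factorial))
      = card α * (#F * (s.factorial * (card α - s).factorial)) := by ring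
    _ ≤ _ := hcount

end Katona

section Families

variable {α : Type*} [DecidableEq α]

theorem card_le_of_no_three_pairwise_disjoint_of_subset {U : Finset α} {s : ℕ} (hs : 1 ≤ s)
    (hU : 3 * s ≤ #U) {F : Finset (Finset α)} (hFU : ∀ A ∈ F, A ⊆ U)
    (hFs : (F : Set (Finset α)).Sized s)
    (hF : ∀ A ∈ F, ∀ B ∈ F, ∀ C ∈ F, ¬(Disjoint A B ∧ Disjoint A C ∧ Disjoint B C)) :
    #F ≤ 2 * (#U - 1).choose (s - 1) := by
  have hmap : ∀ A ∈ F, (A.subtype (· ∈ U)).map (.subtype _) = A :=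
    fun A hA ↦ subtype_map_of_mem (hFU A hA)
  rw [← card_image_of_injOn (f := fun A ↦ A.subtype (· ∈ U)) fun A hA B hB h ↦ by
    rw [← hmap A hA, ← hmap B hB]; exact congrArg _ h]
  rw [← Fintype.card_coe U]
  refine card_le_of_no_three_pairwise_disjoint hs (by simpa using hU) ?_ ?_
  · simp only [Set.Sized, coe_image, Set.forall_mem_image, mem_coe]
    intro A hA
    rw [← card_map, hmap A hA, hFs hA]
  · simp only [forall_mem_image]
    intro A hA B hB C hC ⟨hAB, hAC, hBC⟩
    rw [← disjoint_map (.subtype _), hmap A hA, hmap B hB] at hAB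
    rw [← disjoint_map (.subtype _), hmap A hA, hmap C hC] at hAC
    rw [← disjoint_map (.subtype _), hmap B hB, hmap C hC] at hBC
    exact hF A hA B hB C hC ⟨hAB, hAC, hBC⟩

lemma symmDiff_eq_symmDiff_sdiff {A B T : Finset α} (hA : T ⊆ A) (hB : T ⊆ B) :
    A ∆ B = (A \ T) ∆ (B \ T) := by
  ext x
  have := @hA x; have := @hB x
  simp only [mem_symmDiff, mem_sdiff]
  tauto

variable [Fintype α]

lemma card_filter_superset_le_of_triangleFree {𝒜 : Finset (Finset α)} {k s : ℕ}
    (h𝒜 : (𝒜 : Set (Finset α)).Sized k) (hs : 1 ≤ s) {T : Finset α} (hT : #T + s = k)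
    (hα : 3 * s ≤ card α - #T)
    (htf : ∀ A ∈ 𝒜, ∀ B ∈ 𝒜, ∀ C ∈ 𝒜, A ≠ B → A ≠ C → B ≠ C →
      ¬(#(A ∆ B) = 2 * s ∧ #(A ∆ C) = 2 * s ∧ #(B ∆ C) = 2 * s)) :
    #{A ∈ 𝒜 | T ⊆ A} ≤ 2 * (card α - #T - 1).choose (s - 1) := by
  have hcard : ∀ A ∈ {A ∈ 𝒜 | T ⊆ A}, #(A \ T) = s := fun A hA ↦ by
    rw [mem_filter] at hA
    rw [card_sdiff_of_subset hA.2, h𝒜 hA.1]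
    omega
  have hdist : ∀ A ∈ {A ∈ 𝒜 | T ⊆ A}, ∀ B ∈ {A ∈ 𝒜 | T ⊆ A}, Disjoint (A \ T) (B \ T) →
      A ≠ B ∧ #(A ∆ B) = 2 * s := fun A hA B hB hAB ↦ by
    refine ⟨fun h ↦ ?_, ?_⟩
    · subst h
      have := hcard A hA
      rw [disjoint_self.1 hAB, bot_eq_empty, Finset.card_empty] at this
      omega
    · rw [symmDiff_eq_symmDiff_sdiff (mem_filter.1 hA).2 (mem_filter.1 hB).2,
        hAB.symmDiff_eq_sup, sup_eq_union, card_union_of_disjoint hAB, hcard A hA, hcard B hB]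
      omega
  rw [← card_image_of_injOn (f := (· \ T)) fun A hA B hB h ↦ by
      rw [← sdiff_union_of_subset (mem_filter.1 hA).2, ← sdiff_union_of_subset (mem_filter.1 hB).2]
      exact congrArg (· ∪ T) h,
    ← card_compl]
  refine card_le_of_no_three_pairwise_disjoint_of_subset hs (by rwa [card_compl])
    (fun _ h ↦ ?_) ?_ ?_
  · obtain ⟨A, -, rfl⟩ := mem_image.1 h
    exact fun x hx ↦ mem_compl.2 (mem_sdiff.1 hx).2
  · simp only [Set.Sized, coe_image, Set.forall_mem_image, mem_coe]
    exact hcard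
  · simp only [forall_mem_image]
    intro A hA B hB C hC ⟨hAB, hAC, hBC⟩
    exact htf A (mem_filter.1 hA).1 B (mem_filter.1 hB).1 C (mem_filter.1 hC).1
      (hdist A hA B hB hAB).1 (hdist A hA C hC hAC).1 (hdist B hB C hC hBC).1
      ⟨(hdist A hA B hB hAB).2, (hdist A hA C hC hAC).2, (hdist B hB C hC hBC).2⟩

theorem choose_mul_card_le_of_triangleFree {𝒜 : Finset (Finset α)} {k s : ℕ}
    (h𝒜 : (𝒜 : Set (Finset α)).Sized k) (hs : 1 ≤ s) (hsk : s ≤ k) (hα : k + 2 * s ≤ card α)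
    (htf : ∀ A ∈ 𝒜, ∀ B ∈ 𝒜, ∀ C ∈ 𝒜, A ≠ B → A ≠ C → B ≠ C →
      ¬(#(A ∆ B) = 2 * s ∧ #(A ∆ C) = 2 * s ∧ #(B ∆ C) = 2 * s)) :
    k.choose s * #𝒜 ≤ 2 * (card α).choose (k - s) * (card α - k + s - 1).choose (s - 1) := by
  have hcount := card_mul_le_card_mul (fun A T ↦ T ⊆ A) (s := 𝒜)
    (t := powersetCard (k - s) univ) (m := k.choose s)
    (n := 2 * (card α - k + s - 1).choose (s - 1))
    (fun A hA ↦ by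
      have : {T ∈ powersetCard (k - s) (univ : Finset α) | T ⊆ A} = powersetCard (k - s) A := by
        ext T
        simp [mem_powersetCard, and_comm]
      rw [bipartiteAbove, this, card_powersetCard, h𝒜 hA, Nat.choose_symm hsk])
    (fun T hT ↦ by
      rw [mem_powersetCard] at hT
      have := card_filter_superset_le_of_triangleFree h𝒜 hs (T := T) (by omega) (by omega) htf
      rwa [hT.2, show card α - (k - s) - 1 = card α - k + s - 1 by omega] at this)
  rw [card_powersetCard, card_univ] at hcount
  linarith

end Families

section BoolVectors

variable {ι : Type*} [Fintype ι]

def ones (v : ι → Bool) : Finset ι := {i | v i = true}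

lemma ones_injective : Function.Injective (ones (ι := ι)) := fun v w h ↦ funext fun i ↦ by
  simpa [ones] using congrArg (i ∈ ·) h

lemma hammingDist_eq_card_symmDiff_ones [DecidableEq ι] (v w : ι → Bool) :
    hammingDist v w = #(ones v ∆ ones w) := by
  rw [hammingDist]
  congr 1
  ext i
  simp only [ones, mem_filter, mem_univ, true_and, mem_symmDiff]
  cases v i <;> cases w i <;> decide

end BoolVectors

/-- level bound for triangle-free subsets of the `r`-distance graph
(via shadows at level `k - r/2` and Frankl's matching theorem):
`C(k, r/2) · S_k ≤ 2 · C(n, k - r/2) · C(n - k + r/2 - 1, r/2 - 1)`. -/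
theorem level_bound_r_distance
    (n r k : ℕ) (hr : 0 < r) (hre : Even r) (hrn : 2 * r ≤ n)
    (hk1 : r / 2 < k) (hk2 : 2 * k ≤ n) (S : Finset (Fin n → Bool))
    (htf : ∀ u ∈ S, ∀ v ∈ S, ∀ w ∈ S, u ≠ v → u ≠ w → v ≠ w →
      ¬(hammingDist u v = r ∧ hammingDist u w = r ∧ hammingDist v w = r)) :
    k.choose (r / 2) * (S.filter
        (fun v => (Finset.univ.filter (fun i : Fin n => v i = true)).card = k)).card
      ≤ 2 * n.choose (k - r / 2) * (n - k + r / 2 - 1).choose (r / 2 - 1) := by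
  have hr2 : 2 * (r / 2) = r := Nat.two_mul_div_two_of_even hre
  set Sk := S.filter fun v ↦ #(ones v) = k
  have hbound := choose_mul_card_le_of_triangleFree (𝒜 := Sk.image ones) (k := k) (s := r / 2)
    ?sized (by omega) hk1.le (by simp only [Fintype.card_fin]; omega) ?triangleFree
  · rwa [card_image_of_injective _ ones_injective, Fintype.card_fin] at hbound
  case sized =>
    simp only [Set.Sized, coe_image, Set.forall_mem_image, mem_coe]
    exact fun v hv ↦ (mem_filter.1 hv).2
  case triangleFree =>
    simp only [forall_mem_image, hr2, ← hammingDist_eq_card_symmDiff_ones]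
    intro u hu v hv w hw huv huw hvw
    exact htf u (mem_filter.1 hu).1 v (mem_filter.1 hv).1 w (mem_filter.1 hw).1
      (ne_of_apply_ne _ huv) (ne_of_apply_ne _ huw) (ne_of_apply_ne _ hvw)
end

section
/- Let p and m be positive integers. Let (a, b) and (a', b') be antipodal pairs of sequences Fin p → Bool (i.e., a(i) ≠ b(i) and a'(i) ≠ b'(i) for all i), and suppose the pairs are distinct as unordered pairs, i.e., a ≠ a' and a ≠ b'. For s, t : Fin m → Bool, define v_s : Fin m × Fin p → Bool by v_s(j, i) = a(i) if s(j) = true and b(i) otherwise, and define u_t : Fin m × Fin p → Bool by u_t(j, i) = a'(i) if t(j) = true and b'(i) otherwise. Then the Hamming distance between v_s and u_t is at least m. -/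
theorem hammingDist_prod_eq_sum {ι κ β : Type*} [Fintype ι] [Fintype κ] [DecidableEq β]
    (f g : ι × κ → β) :
    hammingDist f g = ∑ i, hammingDist (fun k => f (i, k)) (fun k => g (i, k)) := by
  simp only [hammingDist, Finset.card_filter, Fintype.sum_prod_type]

theorem card_le_hammingDist_of_forall_ne {ι κ β : Type*} [Fintype ι] [Fintype κ] [DecidableEq β]
    (f g : ι × κ → β) (h : ∀ i, (fun k => f (i, k)) ≠ fun k => g (i, k)) :
    Fintype.card ι ≤ hammingDist f g := by
  rw [hammingDist_prod_eq_sum, Fintype.card_eq_sum_ones]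
  exact Finset.sum_le_sum fun i _ => hammingDist_pos.mpr (h i)

section Antipodal

variable {α : Type*} {a b a' b' : α → Bool}

theorem ne_of_antipodal_of_ne (hab : ∀ i, a i ≠ b i) (hab' : ∀ i, a' i ≠ b' i) (h : a ≠ a') :
    b ≠ b' := by
  refine fun hbb' => h (funext fun i => ?_)
  rw [Bool.eq_not_iff.mpr (hab i), Bool.eq_not_iff.mpr (hab' i), hbb']

theorem ite_ne_ite_of_antipodal (hab : ∀ i, a i ≠ b i) (hab' : ∀ i, a' i ≠ b' i)
    (h1 : a ≠ a') (h2 : a ≠ b') (c d : Bool) :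
    (fun i => if c then a i else b i) ≠ fun i => if d then a' i else b' i := by
  cases c <;> cases d
  · exact ne_of_antipodal_of_ne hab hab' h1
  · exact ne_of_antipodal_of_ne hab (fun i => (hab' i).symm) h2
  · exact h2
  · exact h1

end Antipodal

theorem hammingDist_distinct_antipodal_pairs_general
    (p m : ℕ)
    (a b a' b' : Fin p → Bool)
    (hab : ∀ i, a i ≠ b i) (hab' : ∀ i, a' i ≠ b' i)
    (h1 : a ≠ a') (h2 : a ≠ b')
    (s t : Fin m → Bool) :
    m ≤ hammingDist
      (fun x : Fin m × Fin p => if s x.1 then a x.2 else b x.2)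
      (fun x : Fin m × Fin p => if t x.1 then a' x.2 else b' x.2) := by
  simpa using card_le_hammingDist_of_forall_ne _ _ fun j =>
    ite_ne_ite_of_antipodal hab hab' h1 h2 (s j) (t j)

/-- vertices built from distinct antipodal pairs `(a,b)` and `(a',b')`
(distinct as unordered pairs, i.e. `a ≠ a'` and `a ≠ b'`) are at Hamming distance
at least `m`. -/
theorem hammingDist_distinct_antipodal_pairs
    (p m : ℕ) (hp : 0 < p) (hm : 0 < m)
    (a b a' b' : Fin p → Bool)
    (hab : ∀ i, a i ≠ b i) (hab' : ∀ i, a' i ≠ b' i)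
    (h1 : a ≠ a') (h2 : a ≠ b')
    (s t : Fin m → Bool) :
    m ≤ hammingDist
      (fun x : Fin m × Fin p => if s x.1 then a x.2 else b x.2)
      (fun x : Fin m × Fin p => if t x.1 then a' x.2 else b' x.2) :=
  hammingDist_distinct_antipodal_pairs_general p m a b a' b' hab hab' h1 h2 s t
end

section
/- Let r be a positive even integer with r ≤ n. Then, as real numbers, √(C(n,r) · C(r,r/2) · C(n−r,r/2)) ≤ e^r · 2^(r/2) · (n/r)^(3r/4), where C(a,b) denotes the binomial coefficient and e is Euler's number. -/
/-!
Write `r = 2s`. The estimate `C(m,k) ≤ (e m / k)^k` (from `C(m,k) ≤ m^k / k!` and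
`k^k / k! ≤ e^k`), applied to `C(n,2s)` and to `C(n-2s,s) ≤ C(n,s)`, together with
`C(2s,s) ≤ 4^s`, bounds the product under the root by `(e n / s)^(3s)`. The square of the
right-hand side is exactly `(e n / s)^(3s) · (e/2)^s`, and `e ≥ 2`.
-/

open Real

theorem Nat.choose_le_exp_one_mul_div_pow (m k : ℕ) :
    (m.choose k : ℝ) ≤ (exp 1 * m / k) ^ k := by
  calc (m.choose k : ℝ) ≤ (m : ℝ) ^ k / k.factorial := Nat.choose_le_pow_div k m
    _ = ((m : ℝ) / k) ^ k * ((k : ℝ) ^ k / k.factorial) := by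
        rw [div_pow]; field_simp
    _ ≤ ((m : ℝ) / k) ^ k * exp k := by
        gcongr; exact pow_div_factorial_le_exp _ k.cast_nonneg k
    _ = (exp 1 * m / k) ^ k := by
        rw [← exp_one_pow, mul_div_assoc, mul_pow, mul_comm]

theorem choose_mul_choose_mul_choose_sub_le (n s : ℕ) :
    (n.choose (2 * s) : ℝ) * (2 * s).choose s * (n - 2 * s).choose s
      ≤ (exp 1 * n / s) ^ (3 * s) := by
  have h₁ := Nat.choose_le_exp_one_mul_div_pow n (2 * s)
  have h₂ : ((2 * s).choose s : ℝ) ≤ 4 ^ s := by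
    rw [← Nat.centralBinom_eq_two_mul_choose]; exact_mod_cast s.centralBinom_le_four_pow
  have h₃ : ((n - 2 * s).choose s : ℝ) ≤ (exp 1 * n / s) ^ s :=
    (Nat.cast_le.mpr (Nat.choose_le_choose s (n.sub_le (2 * s)))).trans
      (Nat.choose_le_exp_one_mul_div_pow n s)
  calc _ ≤ (exp 1 * n / (2 * s : ℕ)) ^ (2 * s) * 4 ^ s * (exp 1 * n / s) ^ s := by
        gcongr
    _ = (exp 1 * n / s) ^ (3 * s) := by
        rw [Nat.cast_mul, Nat.cast_two, div_mul_eq_div_div_swap, div_pow,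
          show (4 : ℝ) ^ s = 2 ^ (2 * s) by rw [pow_mul]; norm_num,
          div_mul_cancel₀ _ (by positivity)]
        ring

theorem exp_mul_two_pow_mul_rpow_sq {x : ℝ} (hx : 0 ≤ x) (s : ℕ) :
    (exp (2 * s : ℕ) * 2 ^ s * (x / (2 * s : ℕ)) ^ (3 * ((2 * s : ℕ) : ℝ) / 4)) ^ 2
      = (exp 1 * x / s) ^ (3 * s) * (exp 1 / 2) ^ s := by
  have hpow : ((x / (2 * s : ℕ)) ^ (3 * ((2 * s : ℕ) : ℝ) / 4)) ^ 2
      = (x / (2 * s : ℕ)) ^ (3 * s) := by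
    rw [← rpow_mul_natCast (by positivity), ← rpow_natCast]
    push_cast; ring_nf
  rw [mul_pow, hpow, ← exp_one_pow, Nat.cast_mul, Nat.cast_two, div_mul_eq_div_div_swap,
    div_pow (x / s), pow_mul' (2 : ℝ) 3 s, div_pow (exp 1)]
  field_simp
  ring

theorem sqrt_triangle_count_upper_bound_general
    (n r : ℕ) (hre : Even r) :
    Real.sqrt ((n.choose r : ℝ) * (r.choose (r / 2) : ℝ) * ((n - r).choose (r / 2) : ℝ))
      ≤ Real.exp r * 2 ^ (r / 2) * ((n : ℝ) / r) ^ (3 * (r : ℝ) / 4) := by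
  obtain ⟨s, rfl⟩ := even_iff_two_dvd.mp hre
  rw [Nat.mul_div_cancel_left s two_pos, sqrt_le_iff]
  refine ⟨by positivity, ?_⟩
  calc _ ≤ (exp 1 * n / s) ^ (3 * s) := choose_mul_choose_mul_choose_sub_le n s
    _ ≤ (exp 1 * n / s) ^ (3 * s) * (exp 1 / 2) ^ s :=
        le_mul_of_one_le_right (by positivity)
          (one_le_pow₀ ((one_le_div two_pos).mpr exp_one_gt_two.le))
    _ = _ := (exp_mul_two_pow_mul_rpow_sq n.cast_nonneg s).symm

/-- for positive even `r ≤ n`,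
`√(C(n,r) · C(r,r/2) · C(n-r,r/2)) ≤ e^r · 2^(r/2) · (n/r)^(3r/4)` as real numbers. -/
theorem sqrt_triangle_count_upper_bound
    (n r : ℕ) (hr : 0 < r) (hre : Even r) (hrn : r ≤ n) :
    Real.sqrt ((n.choose r : ℝ) * (r.choose (r / 2) : ℝ) * ((n - r).choose (r / 2) : ℝ))
      ≤ Real.exp r * 2 ^ (r / 2) * ((n : ℝ) / r) ^ (3 * (r : ℝ) / 4) :=
  sqrt_triangle_count_upper_bound_general n r hre
end
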